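/- Let f : R^{N×N} → [0,∞) be a function that is rank-one convex (i.e., t ↦ f(A + tB) is convex for every matrix A and every rank-one matrix B) and vanishes on the sphere {p : |p| = 2} (Frobenius norm). If f ≥ 0 everywhere, then f vanishes on the closed ball {p : |p| ≤ 2}. -/
import Mathlib


open Matrix

/-- Frobenius norm of a real matrix. -/
noncomputable def frob {m n : ℕ} (p : Matrix (Fin m) (Fin n) ℝ) : ℝ :=
  Real.sqrt (∑ i, ∑ j, (p i j) ^ 2)

/-- The matrix `e₁ ⊗ e₁` has rank one. -/
lemma rankB (N : ℕ) : (Matrix.diagonal (Pi.single 0 1 : Fin (N+1) → ℝ)).rank = 1 := by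
  rw [Matrix.rank_diagonal]
  simp [Pi.single_apply, Fintype.card_subtype]

/-- Sum of squared entries of `p + t • e₁⊗e₁`. -/
lemma sumB (N : ℕ) (p : Matrix (Fin (N+1)) (Fin (N+1)) ℝ) (t : ℝ) :
    ∑ i, ∑ j, ((p + t • Matrix.diagonal (Pi.single 0 1 : Fin (N+1) → ℝ)) i j)^2
      = (∑ i, ∑ j, (p i j)^2) + 2*t*(p 0 0) + t^2 := by
  simp only [Matrix.add_apply, Matrix.smul_apply, Matrix.diagonal_apply, Pi.single_apply,
    smul_eq_mul]
  have key : ∀ i j : Fin (N+1),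
      (p i j + t * if i = j then if i = 0 then 1 else 0 else 0)^2
        = p i j^2 + (if j = 0 then (if i = 0 then 2*t*p 0 0 + t^2 else 0) else 0) := by
    intro i j
    by_cases hi : i = 0 <;> by_cases hj : j = 0
    · subst hi; subst hj; simp; ring
    · subst hi
      have : ¬ ((0 : Fin (N+1)) = j) := fun h => hj h.symm
      simp [this, hj]
    · simp [hi, hj, show i ≠ j from fun h => hi (h.trans hj)]
    · rw [if_neg hi, if_neg hj, ite_self]; ring
  simp_rw [key, Finset.sum_add_distrib, Finset.sum_ite_eq', Finset.mem_univ, if_true]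
  simp [Finset.sum_ite_eq']
  ring

/-- a nonnegative rank-one convex function on `N×N` matrices that vanishes
on the Frobenius sphere of radius 2 vanishes on the whole closed ball of radius 2. -/
theorem stmt2 (N : ℕ) (f : Matrix (Fin (N + 1)) (Fin (N + 1)) ℝ → ℝ)
    (hrc : ∀ A B : Matrix (Fin (N + 1)) (Fin (N + 1)) ℝ, B.rank = 1 →
      ConvexOn ℝ Set.univ (fun t : ℝ => f (A + t • B)))
    (hsphere : ∀ p, frob p = 2 → f p = 0)
    (hnonneg : ∀ p, 0 ≤ f p) :
    ∀ p, frob p ≤ 2 → f p = 0 := by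
  intro p hp
  set B := Matrix.diagonal (Pi.single 0 1 : Fin (N+1) → ℝ) with hB
  set s := ∑ i, ∑ j, (p i j)^2 with hsdef
  have hs0 : 0 ≤ s := Finset.sum_nonneg fun i _ =>
    Finset.sum_nonneg fun j _ => sq_nonneg _
  have hsq : Real.sqrt s ≤ 2 := hp
  have hs4 : s ≤ 4 := by
    nlinarith [Real.sq_sqrt hs0, Real.sqrt_nonneg s]
  by_cases hcase : s = 4
  · apply hsphere
    rw [frob, ← hsdef, hcase, show (4:ℝ) = 2^2 by norm_num, Real.sqrt_sq (by norm_num)]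
  have hs4' : s < 4 := lt_of_le_of_ne hs4 hcase
  set c := p 0 0 with hc
  set d := Real.sqrt (c^2 + (4 - s)) with hd
  have hd2 : d^2 = c^2 + (4 - s) := Real.sq_sqrt (by nlinarith)
  have hdpos : 0 < d := Real.sqrt_pos.2 (by nlinarith)
  set t1 := -c - d with ht1def
  set t2 := -c + d with ht2def
  have ht1 : t1 < 0 := by nlinarith [sq_nonneg (c + d)]
  have ht2 : 0 < t2 := by nlinarith [sq_nonneg (c - d)]
  have hroot : ∀ t : ℝ, s + 2*t*c + t^2 = 4 → f (p + t • B) = 0 := by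
    intro t ht
    apply hsphere
    rw [frob, hB, sumB, ← hsdef, ← hc, ht, show (4:ℝ) = 2^2 by norm_num,
      Real.sqrt_sq (by norm_num)]
  have hg1 : f (p + t1 • B) = 0 := hroot t1 (by rw [ht1def]; nlinarith [hd2])
  have hg2 : f (p + t2 • B) = 0 := hroot t2 (by rw [ht2def]; nlinarith [hd2])
  have hcvx := hrc p B (rankB N)
  have hne : (0:ℝ) < t2 - t1 := by linarith
  set a := t2 / (t2 - t1) with ha'
  set b := -t1 / (t2 - t1) with hb'
  have ha : 0 ≤ a := div_nonneg ht2.le hne.le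
  have hb : 0 ≤ b := div_nonneg (by linarith) hne.le
  have hab : a + b = 1 := by
    rw [ha', hb']
    field_simp
    ring
  have hle := hcvx.2 (Set.mem_univ t1) (Set.mem_univ t2) ha hb hab
  simp only [smul_eq_mul] at hle
  have hcomb : a * t1 + b * t2 = 0 := by
    rw [ha', hb']
    field_simp
    ring
  rw [hcomb] at hle
  simp only [zero_smul, add_zero, hg1, hg2, mul_zero] at hle
  exact le_antisymm hle (hnonneg p)
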